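/- arXiv:2005.09926 — 4 statements merged into one kernel-verified Lean document; each statement's English description precedes it below -/
import Mathlib

section
/- Let q be a prime with q ≡ 3 (mod 4) and F = ℚ(⁴√−q) (equivalently F = K(⁴√−q) with K = ℚ(√−q)). Then −1 is not a norm from F to K, i.e. −1 ∉ N_{F/K}(F^×). -/
/-!
Write `x = u + vα` with `u, v ∈ K`, so that `N_{F/K}(x) = u² - βv²`, and `u = a + bβ`,
`v = c + dβ` with `a, b, c, d ∈ ℚ` (here `β` is not a square in `K` because its norm `q` is not a
square in `ℚ`). Then `N(x) = -1` becomes two quadratic equations over `ℚ`; clearing denominators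
gives integers with `(A + Bβ)² - β(C + Dβ)² = -N²` and `N ≠ 0`. Modulo `q`, where `-1` is not a
square since `q ≡ 3 (mod 4)`, this forces `q` to divide each of `A, B, C, D, N`, and infinite
descent gives a contradiction.
-/

open IntermediateField

section QuadraticExtension

variable {k L : Type*} [Field k] [Field L] [Algebra k L] {γ : L} {s : k}

theorem eq_zero_of_algebraMap_add_algebraMap_mul_eq_zero (hγ : γ ^ 2 = algebraMap k L s)
    (hs : ∀ r : k, r ^ 2 ≠ s) {u v : k} (h : algebraMap k L u + algebraMap k L v * γ = 0) :
    u = 0 ∧ v = 0 := by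
  have hinj := (algebraMap k L).injective
  by_cases hv : v = 0
  · subst hv
    simp only [map_zero, zero_mul, add_zero] at h
    exact ⟨hinj (by simpa using h), rfl⟩
  · refine absurd ?_ (hs (-(u / v)))
    have hvL : algebraMap k L v ≠ 0 := (map_ne_zero _).mpr hv
    have hγ' : γ = algebraMap k L (-(u / v)) := by
      rw [map_neg, map_div₀]
      field_simp
      linear_combination h
    exact hinj (by rw [← hγ, hγ', map_pow])

open Polynomial in
theorem minpoly_eq_X_sq_sub_C (hγ : γ ^ 2 = algebraMap k L s) (hs : ∀ r : k, r ^ 2 ≠ s) :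
    minpoly k γ = X ^ 2 - C s :=
  (minpoly.eq_of_irreducible_of_monic (X_pow_sub_C_irreducible_of_prime Nat.prime_two hs)
    (by simp [hγ]) (monic_X_pow_sub_C _ two_ne_zero)).symm

open Polynomial in
noncomputable def basisOfSqEq (hγ : γ ^ 2 = algebraMap k L s) (hs : ∀ r : k, r ^ 2 ≠ s)
    (hadj : k⟮γ⟯ = ⊤) : Module.Basis (Fin 2) k L :=
  have hint : IsIntegral k γ := ⟨X ^ 2 - C s, monic_X_pow_sub_C _ two_ne_zero, by simp [hγ]⟩
  ((adjoin.powerBasis hint).map ((equivOfEq hadj).trans topEquiv)).basis.reindex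
    (finCongr (by simp [minpoly_eq_X_sq_sub_C hγ hs]))

section Basis

variable (hγ : γ ^ 2 = algebraMap k L s) (hs : ∀ r : k, r ^ 2 ≠ s) (hadj : k⟮γ⟯ = ⊤)
include hγ hs hadj

theorem basisOfSqEq_apply (i : Fin 2) : basisOfSqEq hγ hs hadj i = γ ^ (i : ℕ) := by
  rw [basisOfSqEq, Module.Basis.reindex_apply, PowerBasis.coe_basis]
  rfl

theorem basisOfSqEq_repr (u v : k) (i : Fin 2) :
    (basisOfSqEq hγ hs hadj).repr (algebraMap k L u + algebraMap k L v * γ) i = ![u, v] i := by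
  have : algebraMap k L u + algebraMap k L v * γ =
      u • basisOfSqEq hγ hs hadj 0 + v • basisOfSqEq hγ hs hadj 1 := by
    simp [basisOfSqEq_apply, Algebra.smul_def]
  rw [this, map_add, map_smul, map_smul, Module.Basis.repr_self, Module.Basis.repr_self]
  fin_cases i <;> simp

theorem exists_eq_algebraMap_add_algebraMap_mul (x : L) :
    ∃ u v : k, x = algebraMap k L u + algebraMap k L v * γ := by
  refine ⟨(basisOfSqEq hγ hs hadj).repr x 0, (basisOfSqEq hγ hs hadj).repr x 1, ?_⟩
  conv_lhs => rw [← (basisOfSqEq hγ hs hadj).sum_repr x]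
  simp [Fin.sum_univ_two, basisOfSqEq_apply, Algebra.smul_def]

theorem norm_algebraMap_add_algebraMap_mul (u v : k) :
    Algebra.norm k (algebraMap k L u + algebraMap k L v * γ) = u ^ 2 - s * v ^ 2 := by
  have hmulγ : (algebraMap k L u + algebraMap k L v * γ) * γ =
      algebraMap k L (s * v) + algebraMap k L u * γ := by
    rw [map_mul]
    linear_combination algebraMap k L v * hγ
  rw [Algebra.norm_eq_matrix_det (basisOfSqEq hγ hs hadj), Matrix.det_fin_two]
  simp only [Algebra.leftMulMatrix_eq_repr_mul, basisOfSqEq_apply, Fin.val_zero, Fin.val_one,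
    pow_zero, pow_one, mul_one, hmulγ, basisOfSqEq_repr]
  simp only [Fin.isValue, Matrix.cons_val_zero, Matrix.cons_val_one, Matrix.cons_val_fin_one]
  ring

theorem sq_ne_of_forall_sq_ne_neg (hs' : ∀ r : k, r ^ 2 ≠ -s) (b : L) : b ^ 2 ≠ γ := by
  intro hb
  apply hs' (Algebra.norm k b)
  rw [← map_pow, hb]
  simpa using norm_algebraMap_add_algebraMap_mul hγ hs hadj 0 1

end Basis

end QuadraticExtension

/-- `(A + Bβ)² - β (C + Dβ)² = -N²`, written out in the basis `1, β` of `ℚ(β)`, `β² = -q`. -/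
def NormEquations {R : Type*} [CommRing R] (q A B C D N : R) : Prop :=
  A ^ 2 - q * B ^ 2 + 2 * q * C * D + N ^ 2 = 0 ∧ 2 * A * B - C ^ 2 + q * D ^ 2 = 0

section Descent

variable {q : ℕ} [Fact q.Prime] (hq3 : q % 4 = 3)
include hq3

theorem Int.dvd_of_dvd_sq_add_sq {a n : ℤ} (h : (q : ℤ) ∣ a ^ 2 + n ^ 2) : (q : ℤ) ∣ n := by
  by_contra hn
  rw [← ZMod.intCast_zmod_eq_zero_iff_dvd] at h hn
  push_cast at h
  exact ZMod.mod_four_ne_three_of_sq_eq_neg_sq' hn (eq_neg_of_add_eq_zero_left h) hq3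

theorem NormEquations.exists_eq_mul {A B C D N : ℤ} (h : NormEquations (q : ℤ) A B C D N) :
    ∃ A' B' C' D' N' : ℤ, N = q * N' ∧ NormEquations (q : ℤ) A' B' C' D' N' := by
  obtain ⟨h₁, h₂⟩ := h
  have hq : Prime (q : ℤ) := Nat.prime_iff_prime_int.mp Fact.out
  have hsum : (q : ℤ) ∣ A ^ 2 + N ^ 2 := ⟨B ^ 2 - 2 * C * D, by linear_combination h₁⟩
  obtain ⟨A, rfl⟩ := Int.dvd_of_dvd_sq_add_sq hq3 (by rwa [add_comm] at hsum)
  obtain ⟨N, rfl⟩ := Int.dvd_of_dvd_sq_add_sq hq3 hsum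
  obtain ⟨C, rfl⟩ := hq.dvd_of_dvd_pow
    (show (q : ℤ) ∣ C ^ 2 from ⟨2 * A * B + D ^ 2, by linear_combination -h₂⟩)
  obtain ⟨B, rfl⟩ := hq.dvd_of_dvd_pow (show (q : ℤ) ∣ B ^ 2 from
    ⟨A ^ 2 + 2 * C * D + N ^ 2, mul_left_cancel₀ hq.ne_zero (by linear_combination -h₁)⟩)
  obtain ⟨D, rfl⟩ := hq.dvd_of_dvd_pow (show (q : ℤ) ∣ D ^ 2 from
    ⟨C ^ 2 - 2 * A * B, mul_left_cancel₀ hq.ne_zero (by linear_combination h₂)⟩)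
  refine ⟨A, B, C, D, N, rfl, ?_, ?_⟩ <;> refine mul_left_cancel₀ (pow_ne_zero 2 hq.ne_zero) ?_
  · linear_combination h₁
  · linear_combination h₂

theorem NormEquations.eq_zero_of_int {A B C D N : ℤ} (h : NormEquations (q : ℤ) A B C D N) :
    N = 0 := by
  induction hn : N.natAbs using Nat.strong_induction_on generalizing A B C D N with
  | _ n ih =>
    obtain ⟨A', B', C', D', N', rfl, h'⟩ := h.exists_eq_mul hq3
    by_contra hN
    have hN' : N' ≠ 0 := right_ne_zero_of_mul hN
    refine hN' (ih _ ?_ h' rfl)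
    rw [← hn, Int.natAbs_mul]
    have := (Fact.out : q.Prime).two_le
    have := Int.natAbs_pos.mpr hN'
    simp only [Int.natAbs_natCast]
    nlinarith

theorem NormEquations.eq_zero_of_rat {a b c d n : ℚ} (h : NormEquations (q : ℚ) a b c d n) :
    n = 0 := by
  have hint : NormEquations (q : ℤ) (a.num * b.den * c.den * d.den * n.den)
      (a.den * b.num * c.den * d.den * n.den) (a.den * b.den * c.num * d.den * n.den)
      (a.den * b.den * c.den * d.num * n.den) (a.den * b.den * c.den * d.den * n.num) := by
    obtain ⟨h₁, h₂⟩ := h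
    constructor <;> refine Int.cast_injective (α := ℚ) ?_ <;> push_cast <;>
      simp only [← Rat.mul_den_eq_num]
    · linear_combination ((a.den * b.den * c.den * d.den * n.den : ℚ)) ^ 2 * h₁
    · linear_combination ((a.den * b.den * c.den * d.den * n.den : ℚ)) ^ 2 * h₂
  simpa using hint.eq_zero_of_int hq3

end Descent

theorem neg_one_not_norm_general (q : ℕ) (hq : Nat.Prime q) (hq3 : q % 4 = 3)
    (K : Type) [Field K] [NumberField K] (β : K) (hβ : β ^ 2 = -(q : K))
    (hK : IntermediateField.adjoin ℚ {β} = ⊤)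
    (F : Type) [Field F] [Algebra K F] (α : F)
    (hα : α ^ 2 = algebraMap K F β)
    (hF : IntermediateField.adjoin K {α} = ⊤) :
    ∀ x : F, Algebra.norm K x ≠ -1 := by
  have := Fact.mk hq
  have hnegq_not_sq : ∀ r : ℚ, r ^ 2 ≠ -(q : ℚ) := fun r h => by
    have : (0 : ℚ) < q := by exact_mod_cast hq.pos
    nlinarith [sq_nonneg r]
  have hq_not_sq : ∀ r : ℚ, r ^ 2 ≠ -(-(q : ℚ)) := fun r h =>
    hq.not_isSquare (Rat.isSquare_natCast_iff.mp ⟨r, by rw [← sq, h, neg_neg]⟩)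
  have hβ' : β ^ 2 = algebraMap ℚ K (-q) := by rw [hβ, map_neg, map_natCast]
  have hβ_not_sq := sq_ne_of_forall_sq_ne_neg hβ' hnegq_not_sq hK hq_not_sq
  intro x hx
  obtain ⟨u, v, rfl⟩ := exists_eq_algebraMap_add_algebraMap_mul hα hβ_not_sq hF x
  rw [norm_algebraMap_add_algebraMap_mul hα hβ_not_sq hF] at hx
  obtain ⟨a, b, rfl⟩ := exists_eq_algebraMap_add_algebraMap_mul hβ' hnegq_not_sq hK u
  obtain ⟨c, d, rfl⟩ := exists_eq_algebraMap_add_algebraMap_mul hβ' hnegq_not_sq hK v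
  have hcoord : algebraMap ℚ K (a ^ 2 - q * b ^ 2 + 2 * q * c * d + 1 ^ 2) +
      algebraMap ℚ K (2 * a * b - c ^ 2 + q * d ^ 2) * β = 0 := by
    simp only [map_sub, map_add, map_mul, map_pow, map_one, map_ofNat, map_natCast]
    linear_combination hx - ((algebraMap ℚ K b) ^ 2 - 2 * algebraMap ℚ K c * algebraMap ℚ K d -
      (algebraMap ℚ K d) ^ 2 * β) * hβ
  exact one_ne_zero <| NormEquations.eq_zero_of_rat hq3 <|
    eq_zero_of_algebraMap_add_algebraMap_mul_eq_zero hβ' hnegq_not_sq hcoord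

/-- Let `q` be a prime with `q ≡ 3 (mod 4)`, `K = ℚ(√−q)` and `F = K(⁴√−q)`.
Then `−1` is not a norm from `F` to `K`, i.e. `−1 ∉ N_{F/K}(F^×)`. -/
theorem neg_one_not_norm (q : ℕ) (hq : Nat.Prime q) (hq3 : q % 4 = 3)
    (K : Type) [Field K] [NumberField K] (β : K) (hβ : β ^ 2 = -(q : K))
    (hK : IntermediateField.adjoin ℚ {β} = ⊤)
    (F : Type) [Field F] [NumberField F] [Algebra K F] (α : F)
    (hα : α ^ 2 = algebraMap K F β)
    (hF : IntermediateField.adjoin K {α} = ⊤) :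
    ∀ x : F, Algebra.norm K x ≠ -1 :=
  neg_one_not_norm_general q hq hq3 K β hβ hK F α hα hF
end

section
/- Let q be a prime with q ≡ 3 (mod 8). Then the ring of integers of F = ℚ(⁴√−q) is 𝒪_K[⁴√−q], where K = ℚ(√−q); equivalently, 𝒪_F is generated over 𝒪_K by a root of x⁴ + q. -/
/-!
Write `α = ⁴√-q` and `β = α ^ 2 = √-q`. The discriminant of the power basis `1, α` of `F/K` is
`4β`, so `4β • z ∈ 𝓞_K[α]` for every `z ∈ 𝓞_F`, and it remains to divide out `β` and `2`.
The polynomial `X ^ 2 - β` is Eisenstein at the prime `β` (of norm `q`), which removes `β`.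
Since `-q ≡ 5 (mod 8)`, the element `τ = (1 - β) / 2` is integral and satisfies
`τ ^ 2 - τ + 1 ≡ 0 (mod 2)`; hence `2` stays prime in `𝓞_K` and `2 ∤ τ`, so the minimal polynomial
`X ^ 2 - 2X + 2τ` of `α + 1` is Eisenstein at `2`, which removes `2` because `𝓞_K[α + 1] = 𝓞_K[α]`.
-/

open NumberField IntermediateField Polynomial

section Eisenstein

variable {R : Type*} [CommRing R] [IsDomain R]

theorem isEisensteinAt_X_sq_add {p : R} (hp : Prime p) (c : R) {d : R} (hd : ¬p ∣ d) :
    (X ^ 2 + C (p * c) * X + C (p * d)).IsEisensteinAt (Ideal.span {p}) := by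
  have hdeg : (X ^ 2 + C (p * c) * X + C (p * d)).natDegree = 2 := by compute_degree!
  refine Monic.isEisensteinAt_of_mem_of_notMem (by monicity!) ?_ ?_ ?_
  · rw [Ne, Ideal.span_singleton_eq_top]
    exact hp.not_isUnit
  · intro n hn
    rw [hdeg] at hn
    interval_cases n <;> simp [Ideal.mem_span_singleton]
  · rw [Ideal.span_singleton_pow, Ideal.mem_span_singleton]
    simpa [pow_two, mul_dvd_mul_iff_left hp.ne_zero] using hd

theorem isEisensteinAt_X_sq_sub_C {p : R} (hp : Prime p) :
    (X ^ 2 - C p).IsEisensteinAt (Ideal.span {p}) := by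
  simpa [sub_eq_add_neg] using isEisensteinAt_X_sq_add hp 0 (d := -1) fun h =>
    hp.not_isUnit (isUnit_of_dvd_one (dvd_neg.mp h))

variable [IsIntegrallyClosed R]

theorem minpoly_eq_of_isEisensteinAt {S : Type*} [CommRing S] [IsDomain S] [Algebra R S]
    [Module.IsTorsionFree R S] {p : R} (hp : Prime p) {f : R[X]} (hf : f.Monic)
    (hei : f.IsEisensteinAt (Ideal.span {p})) {x : S} (hx : aeval x f = 0) : minpoly R x = f := by
  have hdeg : 0 < f.natDegree := hf.natDegree_pos.mpr fun h => by simp [h] at hx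
  have hirr : Irreducible f :=
    hei.irreducible ((Ideal.span_singleton_prime hp.ne_zero).mpr hp) hf.isPrimitive hdeg
  have hxR : IsIntegral R x := ⟨f, hf, hx⟩
  exact eq_of_monic_of_associated (minpoly.monic hxR) hf <|
    (minpoly.prime_of_isIntegrallyClosed hxR).irreducible.associated_of_dvd hirr
      (minpoly.isIntegrallyClosed_dvd hxR hx)

variable {K L : Type*} [Field K] [Algebra R K] [IsFractionRing R K] [Field L]
  [Algebra K L] [Algebra R L] [IsScalarTower R K L]

theorem mem_adjoin_of_pow_smul_mem_of_isEisensteinAt {x : L} (hgen : Algebra.adjoin K {x} = ⊤)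
    {p : R} (hp : Prime p) {f : R[X]} (hf : f.Monic) (hei : f.IsEisensteinAt (Ideal.span {p}))
    (hx : aeval x f = 0) {z : L} (hz : IsIntegral R z) {n : ℕ}
    (h : p ^ n • z ∈ Algebra.adjoin R {x}) : z ∈ Algebra.adjoin R {x} := by
  have : Module.IsTorsionFree R L := .trans_faithfulSMul R K L
  have hxR : IsIntegral R x := ⟨f, hf, hx⟩
  let B := PowerBasis.ofAdjoinEqTop hxR.tower_top hgen
  have hB : B.gen = x := PowerBasis.ofAdjoinEqTop_gen _ _
  rw [← hB] at h hxR ⊢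
  refine mem_adjoin_of_smul_prime_pow_smul_of_minpoly_isEisensteinAt hp hxR hz h ?_
  rwa [hB, minpoly_eq_of_isEisensteinAt hp hf hei hx]

end Eisenstein

theorem discr_powerBasis_of_minpoly_eq_X_sq_sub_C {K L : Type*} [Field K] [Field L] [Algebra K L]
    [Algebra.IsSeparable K L] (B : PowerBasis K L) {c : K}
    (hB : minpoly K B.gen = X ^ 2 - C c) : Algebra.discr K B.basis = 4 * c := by
  have := B.finite
  have hdim : B.dim = 2 := by rw [← B.natDegree_minpoly, hB, natDegree_X_pow_sub_C]
  have hnorm : Algebra.norm K B.gen = -c := by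
    rw [Algebra.PowerBasis.norm_gen_eq_coeff_zero_minpoly, hB, hdim]
    simp
  have hder : aeval B.gen (derivative (X ^ 2 - C c)) = algebraMap K L 2 * B.gen := by
    simp only [derivative_X_pow, derivative_C, map_sub, map_mul, aeval_C]
    norm_num
  rw [Algebra.discr_powerBasis_eq_norm, B.finrank, hdim, hB, hder, map_mul,
    Algebra.norm_algebraMap, hnorm, B.finrank, hdim]
  ring

theorem Algebra.adjoin_singleton_add_one {R A : Type*} [CommRing R] [Ring A] [Algebra R A] (x : A) :
    Algebra.adjoin R {x + 1} = Algebra.adjoin R {x} := by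
  refine le_antisymm (Algebra.adjoin_le ?_) (Algebra.adjoin_le ?_) <;>
    rw [Set.singleton_subset_iff, SetLike.mem_coe]
  · exact add_mem (Algebra.self_mem_adjoin_singleton R x) (one_mem _)
  · simpa using sub_mem (Algebra.self_mem_adjoin_singleton R (x + 1)) (one_mem _)

section SquareRoot

variable {R K L : Type*} [CommRing R] [IsDomain R] [IsIntegrallyClosed R] [Field K] [Algebra R K]
  [IsFractionRing R K] [Field L] [Algebra K L] [Algebra R L] [IsScalarTower R K L]

theorem smul_mem_adjoin_of_sq_eq_prime [Algebra.IsSeparable K L] {b : R} (hb : Prime b) {α : L}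
    (hα : α ^ 2 = algebraMap R L b) (hgen : Algebra.adjoin K {α} = ⊤) {z : L}
    (hz : IsIntegral R z) : (b * 2 ^ 2) • z ∈ Algebra.adjoin R {α} := by
  have : Module.IsTorsionFree R L := .trans_faithfulSMul R K L
  have hroot : aeval α (X ^ 2 - C b) = 0 := by simp [hα]
  have hαint : IsIntegral R α := ⟨_, monic_X_pow_sub_C b two_ne_zero, hroot⟩
  let B := PowerBasis.ofAdjoinEqTop hαint.tower_top hgen
  have hB : B.gen = α := PowerBasis.ofAdjoinEqTop_gen _ _
  have := B.finite
  have hminK : minpoly K B.gen = X ^ 2 - C (algebraMap R K b) := by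
    rw [hB, minpoly.isIntegrallyClosed_eq_field_fractions' K hαint,
      minpoly_eq_of_isEisensteinAt hb (monic_X_pow_sub_C b two_ne_zero)
        (isEisensteinAt_X_sq_sub_C hb) hroot]
    simp
  have h := Algebra.discr_mul_isIntegral_mem_adjoin K (B := B) (by rwa [hB]) hz
  have hdiscr : (4 : K) * algebraMap R K b = algebraMap R K (b * 2 ^ 2) := by
    rw [map_mul, map_pow, map_ofNat]
    ring
  rwa [discr_powerBasis_of_minpoly_eq_X_sq_sub_C B hminK, hB, hdiscr, algebraMap_smul] at h

theorem mem_adjoin_of_sq_eq_prime [Algebra.IsSeparable K L] {b τ : R} (hb : Prime b)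
    (h2 : Prime (2 : R)) (hτ : 2 * τ = 1 - b) (hτ2 : ¬2 ∣ τ) {α : L}
    (hα : α ^ 2 = algebraMap R L b) (hgen : Algebra.adjoin K {α} = ⊤) {z : L}
    (hz : IsIntegral R z) : z ∈ Algebra.adjoin R {α} := by
  have h₀ := smul_mem_adjoin_of_sq_eq_prime hb hα hgen hz
  rw [mul_smul, ← pow_one b] at h₀
  have h₁ := mem_adjoin_of_pow_smul_mem_of_isEisensteinAt hgen hb
    (monic_X_pow_sub_C b two_ne_zero) (isEisensteinAt_X_sq_sub_C hb) (by simp [hα]) (hz.smul _) h₀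
  have hroot : aeval (α + 1) (X ^ 2 + C (2 * -1) * X + C (2 * τ)) = 0 := by
    have hτL := congrArg (algebraMap R L) hτ
    rw [map_mul, map_sub, map_one, map_ofNat] at hτL
    simp only [map_add, map_mul, map_pow, map_neg, map_one, map_ofNat, aeval_X, aeval_C]
    linear_combination hα + hτL
  have hgen₂ : Algebra.adjoin K {α + 1} = ⊤ := by rwa [Algebra.adjoin_singleton_add_one]
  rw [← Algebra.adjoin_singleton_add_one] at h₁ ⊢
  exact mem_adjoin_of_pow_smul_mem_of_isEisensteinAt hgen₂ h2 (by monicity!)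
    (isEisensteinAt_X_sq_add h2 (-1) hτ2) hroot hz h₁

end SquareRoot

section QuadraticOrder

variable {S : Type*} [CommRing S] [IsDedekindDomain S] [Module.Free ℤ S]

theorem prime_two_of_absNorm_eq_four (h4 : Ideal.absNorm (Ideal.span {(2 : S)}) = 4) {t : S}
    (ht : t ^ 2 - t + 1 ∈ Ideal.span {(2 : S)}) : Prime (2 : S) := by
  have h20 : (2 : S) ≠ 0 := by
    rintro h
    rw [h, Set.singleton_zero, Ideal.span_zero, Ideal.absNorm_bot] at h4
    omega
  have hne : Ideal.span {(2 : S)} ≠ ⊤ := by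
    rw [Ne, ← Ideal.absNorm_eq_one_iff, h4]
    omega
  obtain ⟨P, hPmax, hle⟩ := Ideal.exists_le_maximal _ hne
  have hP1 : Ideal.absNorm P ≠ 1 := by
    rw [Ne, Ideal.absNorm_eq_one_iff]
    exact hPmax.ne_top
  -- in a field with two elements `x ^ 2 = x`, so `t ^ 2 - t + 1` would reduce to `1`
  have hP2 : Ideal.absNorm P ≠ 2 := by
    intro hP2
    rw [Ideal.absNorm_apply, Submodule.cardQuot_apply] at hP2
    let := Ideal.Quotient.field P
    have : Fintype (S ⧸ P) := @Fintype.ofFinite _ (Nat.finite_of_card_ne_zero (by omega))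
    have hsq := FiniteField.pow_card (Ideal.Quotient.mk P t)
    rw [← Nat.card_eq_fintype_card, hP2] at hsq
    have h0 := Ideal.Quotient.eq_zero_iff_mem.mpr (hle ht)
    rw [map_add, map_sub, map_pow, hsq, sub_self, zero_add, map_one] at h0
    exact one_ne_zero h0
  have hP4 : Ideal.absNorm P = 4 := by
    have hdvd : Ideal.absNorm P ∣ 4 := h4 ▸ Ideal.absNorm_dvd_absNorm_of_le hle
    have : Ideal.absNorm P ≤ 4 := Nat.le_of_dvd (by norm_num) hdvd
    interval_cases h : Ideal.absNorm P <;> simp_all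
  obtain ⟨Q, hQ⟩ := Ideal.dvd_iff_le.mpr hle
  have hQ1 : Ideal.absNorm Q = 1 := by
    have := congrArg Ideal.absNorm hQ
    rw [map_mul, h4, hP4] at this
    omega
  rw [Ideal.absNorm_eq_one_iff.mp hQ1, Ideal.mul_top] at hQ
  exact (Ideal.span_singleton_prime h20).mp (hQ ▸ hPmax.isPrime)

theorem absNorm_span_singleton_of_sq_eq_neg_natCast [Module.Finite ℤ S]
    (hS : Module.finrank ℤ S = 2) {b : S} {n : ℕ} (hb : b ^ 2 = -(n : S)) :
    Ideal.absNorm (Ideal.span {b}) = n := by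
  refine Nat.pow_left_injective two_ne_zero (?_ : _ ^ 2 = n ^ 2)
  rw [← map_pow, Ideal.span_singleton_pow, hb, Ideal.span_singleton_neg,
    Ideal.absNorm_span_natCast, hS]

theorem prime_of_sq_eq_neg_prime [Module.Finite ℤ S] (hS : Module.finrank ℤ S = 2) {b : S}
    {q : ℕ} (hq : q.Prime) (hb : b ^ 2 = -(q : S)) : Prime b := by
  have hnorm := absNorm_span_singleton_of_sq_eq_neg_natCast hS hb
  refine Ideal.prime_of_irreducible_absNorm_span ?_ (hnorm ▸ hq)
  rintro rfl
  simp [hq.ne_zero, eq_comm] at hnorm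

end QuadraticOrder

theorem not_two_dvd_of_sq_sub_add_one_mem {R : Type*} [CommRing R] (h2 : ¬IsUnit (2 : R)) {t : R}
    (ht : t ^ 2 - t + 1 ∈ Ideal.span {(2 : R)}) : ¬2 ∣ t := by
  rintro ⟨s, rfl⟩
  refine h2 (Ideal.span_singleton_eq_top.mp (Ideal.eq_top_of_isUnit_mem _ ?_ isUnit_one))
  convert Ideal.sub_mem _ ht
    (Ideal.mul_mem_right (2 * s ^ 2 - s) _ (Ideal.mem_span_singleton_self (2 : R))) using 1
  ring

theorem finrank_eq_two_of_sq_eq_neg_prime {K : Type*} [Field K] [CharZero K] {q : ℕ}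
    (hq : q.Prime) {β : K} (hβ : β ^ 2 = -q) (hK : ℚ⟮β⟯ = ⊤) : Module.finrank ℚ K = 2 := by
  have hq' : Prime (q : ℤ) := Nat.prime_iff_prime_int.mp hq
  have hroot : aeval β (X ^ 2 - C (-q : ℤ)) = 0 := by simp [hβ]
  have hint : IsIntegral ℤ β := ⟨_, monic_X_pow_sub_C _ two_ne_zero, hroot⟩
  rw [← IntermediateField.finrank_top', ← hK, IntermediateField.adjoin.finrank hint.tower_top,
    minpoly.isIntegrallyClosed_eq_field_fractions' ℚ hint, (minpoly.monic hint).natDegree_map,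
    minpoly_eq_of_isEisensteinAt hq'.neg (monic_X_pow_sub_C _ two_ne_zero)
      (isEisensteinAt_X_sq_sub_C hq'.neg) hroot, natDegree_X_pow_sub_C]

theorem exists_two_mul_eq_one_sub {K : Type*} [Field K] [NumberField K] {q : ℕ} (hq8 : q % 8 = 3)
    {b : 𝓞 K} (hb : b ^ 2 = -(q : 𝓞 K)) :
    ∃ τ : 𝓞 K, 2 * τ = 1 - b ∧ τ ^ 2 - τ + 1 ∈ Ideal.span {(2 : 𝓞 K)} := by
  obtain ⟨m, hm⟩ : ∃ m : ℕ, q = 8 * m + 3 := ⟨q / 8, by omega⟩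
  have hbK : algebraMap (𝓞 K) K b ^ 2 = -(8 * m + 3) := by
    have := congrArg (algebraMap (𝓞 K) K) hb
    rw [map_pow, map_neg, map_natCast, hm] at this
    exact_mod_cast this
  let t : K := (1 - algebraMap (𝓞 K) K b) / 2
  have hroot : t ^ 2 - t + (2 * m + 1) = 0 := by
    linear_combination hbK / 4
  let τ : 𝓞 K := ⟨t, X ^ 2 - X + C (2 * m + 1 : ℤ), by monicity!, by simpa using hroot⟩
  have hτ : algebraMap (𝓞 K) K τ = t := rfl
  refine ⟨τ, RingOfIntegers.coe_injective ?_,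
    Ideal.mem_span_singleton.mpr ⟨-m, RingOfIntegers.coe_injective ?_⟩⟩
  · rw [map_mul, map_sub, map_one, map_ofNat, hτ]
    ring
  · rw [map_add, map_sub, map_pow, map_one, map_mul, map_neg, map_natCast, map_ofNat, hτ]
    linear_combination hroot

theorem NumberField.RingOfIntegers.adjoin_eq_top_of_forall_mem {K F : Type*} [Field K] [Field F]
    [Algebra K F] (a : 𝓞 F) (h : ∀ z : F, IsIntegral (𝓞 K) z → z ∈ Algebra.adjoin (𝓞 K) {(a : F)}) :
    Algebra.adjoin (𝓞 K) {a} = ⊤ := by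
  let φ : 𝓞 F →ₐ[𝓞 K] F := IsScalarTower.toAlgHom (𝓞 K) (𝓞 F) F
  refine eq_top_iff.mpr fun y _ => ?_
  have hy := h (φ y) (RingOfIntegers.isIntegral_coe y).tower_top
  rw [show (a : F) = φ a from rfl, ← AlgHom.map_adjoin_singleton] at hy
  obtain ⟨x, hx, hxy⟩ := Subalgebra.mem_map.mp hy
  rwa [RingOfIntegers.coe_injective hxy] at hx

/-- Let `q` be a prime with `q ≡ 3 (mod 8)`. Then the ring of integers of
`F = ℚ(⁴√−q)` is `𝒪_K[⁴√−q]`, where `K = ℚ(√−q)`. -/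
theorem ringOfIntegers_eq_adjoin (q : ℕ) (hq : Nat.Prime q) (hq8 : q % 8 = 3)
    (K : Type) [Field K] [NumberField K] (β : K) (hβ : β ^ 2 = -(q : K))
    (hK : IntermediateField.adjoin ℚ {β} = ⊤)
    (F : Type) [Field F] [NumberField F] [Algebra K F] (α : F)
    (hα : α ^ 2 = algebraMap K F β)
    (hF : IntermediateField.adjoin K {α} = ⊤)
    (a : 𝓞 F) (ha : (a : F) = α) :
    Algebra.adjoin (𝓞 K) {a} = ⊤ := by
  let b : 𝓞 K := ⟨β, .of_pow two_pos <| by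
    rw [hβ, ← map_natCast (algebraMap ℤ K), ← map_neg]; exact isIntegral_algebraMap⟩
  have hb : b ^ 2 = -(q : 𝓞 K) := RingOfIntegers.coe_injective <| by
    rw [map_pow, map_neg, map_natCast]; exact hβ
  have hrank : Module.finrank ℤ (𝓞 K) = 2 := by
    rw [RingOfIntegers.rank, finrank_eq_two_of_sq_eq_neg_prime hq hβ hK]
  obtain ⟨τ, hτ, hτ2⟩ := exists_two_mul_eq_one_sub hq8 hb
  have h2 : Prime (2 : 𝓞 K) := prime_two_of_absNorm_eq_four
    (by simpa [hrank] using Ideal.absNorm_span_natCast (S := 𝓞 K) 2) hτ2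
  have hαb : α ^ 2 = algebraMap (𝓞 K) F b := by
    rw [hα, IsScalarTower.algebraMap_apply (𝓞 K) K F]
    rfl
  refine RingOfIntegers.adjoin_eq_top_of_forall_mem a fun z hz => ?_
  rw [ha]
  exact mem_adjoin_of_sq_eq_prime (prime_of_sq_eq_neg_prime hrank hq hb) h2 hτ
    (not_two_dvd_of_sq_sub_add_one_mem h2.not_isUnit hτ2) hαb
    (Algebra.adjoin_eq_top_of_primitive_element (Algebra.IsAlgebraic.isAlgebraic α) hF) hz
end

section
/- Let q be a prime with q ≡ 15 (mod 16) and let 𝔭 be a prime of K = ℚ(√−q) above 2 chosen so that the induced embedding K ↪ ℚ₂ sends √−q to an element ≡ 7 mod 8. Then the completion of F = K(⁴√−q) at the prime 𝔓 above 𝔭 is ℚ₂(√−1), i.e. F_𝔓 = ℚ₂(i). -/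
/-!
Since `σ(√−q) ≡ 7 mod 8`, Hensel's lemma makes `−σ(√−q) = z²` a square in `ℚ₂`, so
`j = ι(⁴√−q) / z` is a square root of `−1` in the completion. The `ℚ₂`-algebra `ℚ₂(j)` is
finite-dimensional, hence closed, and it contains the image of `F = K(⁴√−q)` because `K` lands
in `ℚ₂` and `⁴√−q = z j`; since that image is dense, `ℚ₂(j)` is the whole completion.
-/

open Polynomial in
theorem PadicInt.exists_sq_eq_one_add_eight_mul (d : ℤ_[2]) :
    ∃ z : ℤ_[2], z ^ 2 = 1 + 8 * d ∧ z ≠ 0 := by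
  have h2 : ‖(2 : ℤ_[2])‖ = 2⁻¹ := by simpa using PadicInt.norm_p (p := 2)
  have h8d : ‖8 * d‖ ≤ 8⁻¹ := by
    rw [norm_mul, show (8 : ℤ_[2]) = 2 ^ 3 by norm_num, norm_pow, h2]
    nlinarith [PadicInt.norm_le_one d, norm_nonneg d]
  have hderiv : (derivative (X ^ 2 - C (1 + 8 * d))).aeval (1 : ℤ_[2]) = 2 := by
    simp [one_add_one_eq_two]
  obtain ⟨z, hz, hz1, -⟩ := hensels_lemma (F := X ^ 2 - C (1 + 8 * d)) (a := 1) (by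
    rw [hderiv, h2]
    simpa using h8d.trans_lt (by norm_num))
  rw [hderiv, h2] at hz1
  refine ⟨z, by simpa [sub_eq_zero] using hz, ?_⟩
  rintro rfl
  norm_num at hz1

theorem Algebra.isClosed_adjoin_singleton_of_isIntegral {k E : Type*}
    [NontriviallyNormedField k] [CompleteSpace k] [Ring E] [TopologicalSpace E]
    [IsTopologicalAddGroup E] [T2Space E] [Algebra k E] [ContinuousSMul k E]
    {x : E} (hx : IsIntegral k x) : IsClosed (Algebra.adjoin k {x} : Set E) :=
  haveI : FiniteDimensional k (Subalgebra.toSubmodule (Algebra.adjoin k {x})) :=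
    (Submodule.fg_iff_finiteDimensional _).mp hx.fg_adjoin_singleton
  (Subalgebra.toSubmodule (Algebra.adjoin k {x})).closed_of_finiteDimensional

theorem Subalgebra.eq_top_of_isClosed_of_denseRange {k E X : Type*} [CommSemiring k]
    [Semiring E] [Algebra k E] [TopologicalSpace E] {A : Subalgebra k E}
    (hA : IsClosed (A : Set E)) {f : X → E} (hf : DenseRange f) (hfA : ∀ x, f x ∈ A) :
    A = ⊤ :=
  Algebra.eq_top_iff.mpr fun y =>
    closure_minimal (Set.range_subset_iff.mpr hfA) hA (hf.closure_range ▸ Set.mem_univ y)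

theorem IntermediateField.map_mem_of_adjoin_simple_eq_top {K F R : Type*} [Field K] [Field F]
    [Algebra K F] [Ring R] {α : F} (hα : IsAlgebraic K α) (hF : adjoin K {α} = ⊤)
    (f : F →+* R) {S : Subring R} (hK : ∀ x, f (algebraMap K F x) ∈ S) (hαS : f α ∈ S)
    (x : F) : f x ∈ S := by
  have hx : x ∈ Algebra.adjoin K {α} := by
    rw [(adjoin_simple_eq_top_iff_of_isAlgebraic hα).mp hF]; trivial
  induction hx using Algebra.adjoin_induction with
  | mem y hy => rwa [Set.mem_singleton_iff.mp hy]
  | algebraMap y => exact hK y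
  | add y z _ _ hy hz => rw [map_add]; exact S.add_mem hy hz
  | mul y z _ _ hy hz => rw [map_mul]; exact S.mul_mem hy hz

theorem completion_eq_Q2_adjoin_i_general
    (K : Type) [Field K] (β : K)
    (F : Type) [Field F] [Algebra K F] (α : F)
    (hα : α ^ 2 = algebraMap K F β)
    (hF : IntermediateField.adjoin K {α} = ⊤)
    -- the embedding `σ : K ↪ ℚ₂` induced by `𝔭`, with `σ(√−q) ≡ 7 mod 8`
    (σ : K →+* ℚ_[2]) (hσ : ∃ c : ℤ_[2], σ β = 7 + 8 * (c : ℚ_[2]))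
    -- `L` together with `ι` is the completion of `F` at the prime `𝔓` above `𝔭`
    (L : Type) [NormedField L] [Algebra ℚ_[2] L]
    (hisom : ∀ x : ℚ_[2], ‖algebraMap ℚ_[2] L x‖ = ‖x‖)
    (ι : F →+* L) (hdense : DenseRange ι)
    (hcompat : ∀ x : K, ι (algebraMap K F x) = algebraMap ℚ_[2] L (σ x)) :
    ∃ j : L, j ^ 2 = -1 ∧ Algebra.adjoin ℚ_[2] {j} = ⊤ := by
  let _ : NormedSpace ℚ_[2] L := ⟨fun x y => by rw [Algebra.smul_def, norm_mul, hisom]⟩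
  obtain ⟨c, hc⟩ := hσ
  -- `-σ β ≡ 1 mod 8` is a square in `ℚ₂`
  obtain ⟨z, hz, hz0⟩ := PadicInt.exists_sq_eq_one_add_eight_mul (-(1 + c))
  set u : L := algebraMap ℚ_[2] L z
  have hu0 : u ≠ 0 := by simpa [u] using hz0
  have hzsq : (z : ℚ_[2]) ^ 2 = -σ β := by
    rw [← PadicInt.coe_pow, hz, hc]
    push_cast [show ((8 : ℤ_[2]) : ℚ_[2]) = 8 from rfl]
    ring
  have hια : ι α ^ 2 = -u ^ 2 := by
    rw [← map_pow, hα, hcompat, ← map_pow, hzsq, map_neg, neg_neg]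
  set j := ι α / u
  have hj : j ^ 2 = -1 := by rw [div_pow, hια, neg_div, div_self (pow_ne_zero 2 hu0)]
  have hj_int : IsIntegral ℚ_[2] j :=
    ⟨Polynomial.X ^ 2 + 1, Polynomial.monic_X_pow_add_C 1 two_ne_zero, by simp [hj]⟩
  have hα_alg : IsAlgebraic K α :=
    ⟨Polynomial.X ^ 2 - Polynomial.C β, Polynomial.X_pow_sub_C_ne_zero two_pos β, by simp [hα]⟩
  have hαj : ι α ∈ Algebra.adjoin ℚ_[2] {j} := by
    rw [show ι α = u * j by rw [mul_div_cancel₀ _ hu0]]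
    exact Subalgebra.mul_mem _ (Subalgebra.algebraMap_mem _ _) (Algebra.subset_adjoin rfl)
  refine ⟨j, hj, Subalgebra.eq_top_of_isClosed_of_denseRange
    (Algebra.isClosed_adjoin_singleton_of_isIntegral hj_int) hdense fun x => ?_⟩
  exact IntermediateField.map_mem_of_adjoin_simple_eq_top
    (S := (Algebra.adjoin ℚ_[2] {j}).toSubring) hα_alg hF ι
    (fun y => hcompat y ▸ Subalgebra.algebraMap_mem _ _) hαj x

/-- Let `q ≡ 15 (mod 16)` be prime and let `𝔭` be the prime of `K = ℚ(√−q)` above `2`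
chosen so that the induced embedding `σ : K ↪ ℚ₂` sends `√−q` to an element `≡ 7 mod 8`.
Then the completion `L` of `F = K(⁴√−q)` at the prime `𝔓` above `𝔭` is `ℚ₂(√−1)`,
i.e. `F_𝔓 = ℚ₂(i)`. -/
theorem completion_eq_Q2_adjoin_i (q : ℕ) (hq : Nat.Prime q) (hq16 : q % 16 = 15)
    (K : Type) [Field K] [NumberField K] (β : K) (hβ : β ^ 2 = -(q : K))
    (hK : IntermediateField.adjoin ℚ {β} = ⊤)
    (F : Type) [Field F] [NumberField F] [Algebra K F] (α : F)
    (hα : α ^ 2 = algebraMap K F β)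
    (hF : IntermediateField.adjoin K {α} = ⊤)
    -- the embedding `σ : K ↪ ℚ₂` induced by `𝔭`, with `σ(√−q) ≡ 7 mod 8`
    (σ : K →+* ℚ_[2]) (hσ : ∃ c : ℤ_[2], σ β = 7 + 8 * (c : ℚ_[2]))
    -- `L` together with `ι` is the completion of `F` at the prime `𝔓` above `𝔭`
    (L : Type) [NormedField L] [CompleteSpace L] [Algebra ℚ_[2] L]
    (hisom : ∀ x : ℚ_[2], ‖algebraMap ℚ_[2] L x‖ = ‖x‖)
    (ι : F →+* L) (hdense : DenseRange ι)
    (hcompat : ∀ x : K, ι (algebraMap K F x) = algebraMap ℚ_[2] L (σ x)) :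
    ∃ j : L, j ^ 2 = -1 ∧ Algebra.adjoin ℚ_[2] {j} = ⊤ :=
  completion_eq_Q2_adjoin_i_general K β F α hα hF σ hσ L hisom ι hdense hcompat
end

section
/- Let q be a prime with q ≡ 3 (mod 8), F = ℚ(⁴√−q), and 𝔓 the unique prime of F above 2. Then the completed local field F_𝔓 does not contain a square root of −1. -/
open NumberField IntermediateField

/-!
Write `q = 8m + 3`, let `A` be a fourth root of `-q` and `i` a square root of `-1` in the
completion, with the valuation normalized by `v 2 = 2`. Then `u = (A² - 1)/2` is a root of
`X² + X + (2m + 1)`, hence a unit lifting a primitive cube root of unity (so `u - 1` is a unit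
too), and `t = A - 1` satisfies `t (t + 2) = 2u`, hence `v t = 1`. For `r = i - 1 - u t` one has
`r² + 2r(1 + u t) + 4(1 - m(u - 1)) = 2u t (u - 1)`. The right side has valuation `3`, while the
left side has valuation `≥ 4` if `v r ≥ 2` and the even number `2 v r` otherwise.
-/

open IsUltrametricDist

theorem Ideal.notMem_pow_succ_of_span_singleton_eq_pow {R : Type*} [CommRing R] [IsDomain R]
    {P : Ideal R} (hP : P ≠ ⊤) {a : R} (ha : a ≠ 0) {n : ℕ} (h : Ideal.span {a} = P ^ n) :
    a ∉ P ^ (n + 1) := by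
  rw [pow_succ, ← h, Ideal.mem_span_singleton_mul]
  rintro ⟨y, hy, hay⟩
  obtain rfl : y = 1 := mul_left_cancel₀ ha (by rw [hay, mul_one])
  exact hP ((Ideal.eq_top_iff_one P).2 hy)

section NormedField

variable {L : Type*} [NormedField L]

variable (L) in
-- For `‖2‖ < 1`: the absolute ramification index of `L` divides `2`.
def NormSqInZPowersNormTwo : Prop := ∀ z : L, z ≠ 0 → ∃ k : ℤ, ‖z‖ ^ 2 = ‖(2 : L)‖ ^ k

theorem norm_pow_four_ne_norm_two_pow_three [CharZero L] (h2 : ‖(2 : L)‖ < 1)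
    (hdisc : NormSqInZPowersNormTwo L) (r : L) : ‖r‖ ^ 4 ≠ ‖(2 : L)‖ ^ 3 := by
  have h2pos : 0 < ‖(2 : L)‖ := norm_pos_iff.2 two_ne_zero
  rcases eq_or_ne r 0 with rfl | hr
  · simpa using (pow_pos h2pos 3).ne
  obtain ⟨k, hk⟩ := hdisc r hr
  rw [show ‖r‖ ^ 4 = (‖r‖ ^ 2) ^ 2 by ring, hk, ← zpow_natCast, ← zpow_mul, ← zpow_natCast,
    Ne, zpow_right_inj₀ h2pos h2.ne]
  omega

end NormedField

section UltrametricField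

variable {L : Type*} [NormedField L] [IsUltrametricDist L]

theorem norm_two_mul_intCast_add_one (h2 : ‖(2 : L)‖ < 1) (m : ℤ) : ‖2 * (m : L) + 1‖ = 1 := by
  have hlt : ‖2 * (m : L)‖ < ‖(1 : L)‖ := by
    rw [norm_mul, norm_one]
    exact (mul_le_of_le_one_right (norm_nonneg _) (norm_intCast_le_one L m)).trans_lt h2
  rw [norm_add_eq_max_of_norm_ne_norm hlt.ne, max_eq_right hlt.le, norm_one]

theorem norm_eq_one_of_norm_mul_add_eq_one {u b : L} (hb : ‖b‖ ≤ 1) (h : ‖u * (u + b)‖ = 1) :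
    ‖u‖ = 1 := by
  rw [norm_mul] at h
  rcases lt_trichotomy ‖u‖ 1 with hu | hu | hu
  · have : ‖u + b‖ ≤ 1 := (norm_add_le_max u b).trans (max_le hu.le hb)
    nlinarith [norm_nonneg u]
  · exact hu
  · have : ‖u + b‖ = ‖u‖ := by
      rw [norm_add_eq_max_of_norm_ne_norm (by linarith), max_eq_left (by linarith)]
    rw [this] at h
    nlinarith

theorem norm_sq_eq_norm_two_of_mul_add_two_eq [CharZero L] (h2 : ‖(2 : L)‖ < 1) {t y : L}
    (hy : ‖y‖ = ‖(2 : L)‖) (h : t * (t + 2) = y) : ‖t‖ ^ 2 = ‖(2 : L)‖ := by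
  have h2pos : 0 < ‖(2 : L)‖ := norm_pos_iff.2 two_ne_zero
  rcases le_or_gt ‖t‖ ‖(2 : L)‖ with ht | ht
  · have : ‖t + 2‖ ≤ ‖(2 : L)‖ := (norm_add_le_max t 2).trans (max_le ht le_rfl)
    have : ‖y‖ ≤ ‖(2 : L)‖ * ‖(2 : L)‖ := by
      rw [← h, norm_mul]; exact mul_le_mul ht this (norm_nonneg _) h2pos.le
    nlinarith
  · have : ‖t + 2‖ = ‖t‖ := by
      rw [norm_add_eq_max_of_norm_ne_norm ht.ne', max_eq_left ht.le]
    rw [← hy, ← h, norm_mul, this, sq]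

theorem sq_add_two_mul_add_ne [CharZero L] (h2 : ‖(2 : L)‖ < 1)
    (hdisc : NormSqInZPowersNormTwo L) {r y z R : L} (hy : ‖y‖ ≤ 1) (hz : ‖z‖ ≤ ‖(2 : L)‖ ^ 2)
    (hR : ‖R‖ ^ 2 = ‖(2 : L)‖ ^ 3) : r ^ 2 + 2 * r * y + z ≠ R := by
  rintro rfl
  have h2pos : 0 < ‖(2 : L)‖ := norm_pos_iff.2 two_ne_zero
  have hlin : ‖2 * r * y‖ ≤ ‖(2 : L)‖ * ‖r‖ := by
    rw [norm_mul, norm_mul]; exact mul_le_of_le_one_right (by positivity) hy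
  rcases le_or_gt ‖r‖ ‖(2 : L)‖ with hr | hr
  · have hsum : ‖r ^ 2 + 2 * r * y + z‖ ≤ ‖(2 : L)‖ ^ 2 := by
      refine (norm_add_le_max _ _).trans (max_le ((norm_add_le_max _ _).trans (max_le ?_ ?_)) hz)
      · rw [norm_pow]; gcongr
      · nlinarith
    have h43 : ‖(2 : L)‖ ^ 4 < ‖(2 : L)‖ ^ 3 := pow_lt_pow_right_of_lt_one₀ h2pos h2 (by norm_num)
    nlinarith [pow_le_pow_left₀ (norm_nonneg _) hsum 2]
  · have hsmall : ‖2 * r * y + z‖ < ‖r ^ 2‖ := by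
      rw [norm_pow]
      refine (norm_add_le_max _ _).trans_lt (max_lt ?_ ?_) <;> nlinarith
    rw [add_assoc, norm_add_eq_max_of_norm_ne_norm hsmall.ne', max_eq_left hsmall.le, norm_pow,
      ← pow_mul] at hR
    exact norm_pow_four_ne_norm_two_pow_three h2 hdisc r hR

theorem sq_ne_neg_one_of_pow_four_eq_neg [CharZero L] (h2 : ‖(2 : L)‖ < 1)
    (hdisc : NormSqInZPowersNormTwo L) {q : ℕ} (hq : q % 8 = 3) {A : L} (hA : A ^ 4 = -q)
    (x : L) : x ^ 2 ≠ -1 := by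
  intro hx
  obtain ⟨m, rfl⟩ : ∃ m : ℕ, q = 8 * m + 3 := ⟨q / 8, by omega⟩
  set u := (A ^ 2 - 1) / 2
  set t := A - 1
  have hA2 : A ^ 2 = 2 * u + 1 := by simp only [u]; ring
  have hu : u * (u + 1) = -(2 * (m : L) + 1) := by
    push_cast at hA
    linear_combination hA / 4 - (A ^ 2 + 2 * u + 1) / 4 * hA2
  have hu1 : ‖u‖ = 1 := norm_eq_one_of_norm_mul_add_eq_one norm_one.le (by
    rw [hu, norm_neg]; exact_mod_cast norm_two_mul_intCast_add_one h2 m)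
  have hu1' : ‖u - 1‖ = 1 := by
    have h : (u - 1) * (u - 1 + 3) = -(2 * ((m + 1 : ℤ) : L) + 1) := by
      push_cast; linear_combination hu
    refine norm_eq_one_of_norm_mul_add_eq_one (b := 3) ?_ ?_
    · exact_mod_cast norm_natCast_le_one L 3
    · rw [h, norm_neg, norm_two_mul_intCast_add_one h2]
  have htu : t * (t + 2) = 2 * u := by linear_combination hA2
  have ht : ‖t‖ ^ 2 = ‖(2 : L)‖ :=
    norm_sq_eq_norm_two_of_mul_add_two_eq h2 (by rw [norm_mul, hu1, mul_one]) htu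
  have ht1 : ‖t‖ ≤ 1 := by nlinarith [norm_nonneg t]
  refine sq_add_two_mul_add_ne h2 hdisc (r := x - 1 - u * t) (y := 1 + u * t)
    (z := 4 * (1 - m * (u - 1))) ?_ ?_ (R := 2 * u * t * (u - 1)) ?_ ?_
  · refine (norm_add_le_max _ _).trans (max_le norm_one.le ?_)
    rw [norm_mul, hu1, one_mul]; exact ht1
  · have hm : ‖1 - m * (u - 1)‖ ≤ 1 := by
      rw [sub_eq_add_neg]
      refine (norm_add_le_max _ _).trans (max_le norm_one.le ?_)
      rw [norm_neg, norm_mul, hu1', mul_one]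
      exact norm_natCast_le_one L m
    rw [show (4 : L) = 2 ^ 2 by norm_num, norm_mul, norm_pow]
    exact mul_le_of_le_one_right (by positivity) hm
  · simp only [norm_mul, hu1, hu1']; linear_combination ‖(2 : L)‖ ^ 2 * ht
  · linear_combination hx - u ^ 2 * htu - 2 * (u - 1) * hu

end UltrametricField

theorem no_sqrt_neg_one_in_completion_general (q : ℕ) (hq8 : q % 8 = 3)
    (F : Type) [Field F] [NumberField F] (α : F) (hα : α ^ 4 = -(q : F))
    (𝔓 : Ideal (𝓞 F)) (h𝔓 : 𝔓.IsPrime) (h2 : Ideal.span {(2 : 𝓞 F)} = 𝔓 ^ 2)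
    -- `L` together with `ι` and `v` is the completion `F_𝔓` of `F` at `𝔓`
    (L : Type) [NormedField L] [IsUltrametricDist L] [CharZero L]
    (v : L → ℤ)
    (hnorm : ∀ x : L, x ≠ 0 → ‖x‖ = (2 : ℝ) ^ (-(v x : ℝ) / 2))
    (ι : F →+* L)
    (hcomp : ∀ x : 𝓞 F, x ≠ 0 → ∀ n : ℕ, ((n : ℤ) ≤ v (ι (x : F)) ↔ x ∈ 𝔓 ^ n)) :
    ∀ x : L, x ^ 2 ≠ -1 := by
  have hv2 : v 2 = 2 := by
    have hle := (hcomp 2 two_ne_zero 2).2 (h2 ▸ Ideal.mem_span_singleton_self 2)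
    have hlt := mt (hcomp 2 two_ne_zero 3).1
      (Ideal.notMem_pow_succ_of_span_singleton_eq_pow h𝔓.ne_top two_ne_zero h2)
    simp only [map_ofNat] at hle hlt
    omega
  have hnorm2 : ‖(2 : L)‖ = 2⁻¹ := by
    rw [hnorm 2 two_ne_zero, hv2]; norm_num
  refine sq_ne_neg_one_of_pow_four_eq_neg (by rw [hnorm2]; norm_num) (fun z hz ↦ ⟨v z, ?_⟩) hq8
    (A := ι α) (by rw [← map_pow, hα, map_neg, map_natCast])
  rw [hnorm z hz, hnorm2, ← Real.rpow_natCast, ← Real.rpow_mul zero_le_two, inv_zpow',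
    ← Real.rpow_intCast]
  push_cast
  ring_nf

/-- Let `q ≡ 3 (mod 8)` be prime, `F = ℚ(⁴√−q)` and `𝔓` the unique prime of `F` above
`2`. Then the completed local field `F_𝔓` does not contain a square root of `−1`. -/
theorem no_sqrt_neg_one_in_completion (q : ℕ) (hq : Nat.Prime q) (hq8 : q % 8 = 3)
    (F : Type) [Field F] [NumberField F] (α : F) (hα : α ^ 4 = -(q : F))
    (hF : IntermediateField.adjoin ℚ {α} = ⊤)
    (𝔓 : Ideal (𝓞 F)) (h𝔓 : 𝔓.IsPrime) (h2 : Ideal.span {(2 : 𝓞 F)} = 𝔓 ^ 2)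
    -- `L` together with `ι` and `v` is the completion `F_𝔓` of `F` at `𝔓`
    (L : Type) [NormedField L] [CompleteSpace L] [IsUltrametricDist L] [CharZero L]
    (v : L → ℤ)
    (hmul : ∀ x y : L, x ≠ 0 → y ≠ 0 → v (x * y) = v x + v y)
    (hnorm : ∀ x : L, x ≠ 0 → ‖x‖ = (2 : ℝ) ^ (-(v x : ℝ) / 2))
    (ι : F →+* L) (hdense : DenseRange ι)
    (hcomp : ∀ x : 𝓞 F, x ≠ 0 → ∀ n : ℕ, ((n : ℤ) ≤ v (ι (x : F)) ↔ x ∈ 𝔓 ^ n)) :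
    ∀ x : L, x ^ 2 ≠ -1 :=
  no_sqrt_neg_one_in_completion_general q hq8 F α hα 𝔓 h𝔓 h2 L v hnorm ι hcomp
end
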